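/- Let C, M < ∞, let f : [0,T]×O → ℝ be measurable with |f(s,q)| ≤ C for all (s,q), and let u ∈ L²([0,T]×O) with ∫_{[0,T]×O} u² ≤ M. Define Ψ(t,r) = ∫₀^t ∫_O G(t,s,r,q) f(s,q) u(s,q) dq ds. Then for every α ∈ (0, ᾱ) there exists a constant c < ∞, depending only on α, K, T, γ, d, O, C and M, such that |Ψ(t₂,r₂) − Ψ(t₁,r₁)| ≤ c · ρ((t₁,r₁),(t₂,r₂))^α for all t₁,t₂ ∈ [0,T] and r₁,r₂ ∈ O, where ρ denotes the Euclidean distance on [0,T]×O ⊂ ℝ^{d+1}. -/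

import Mathlib

/-!
Since `G t s = 0` for `s ≥ t`, `Ψ(t, r)` is the integral of `G(t,·,r,·) f u` over all of
`[0,T] × O`, and Cauchy–Schwarz gives
`|Ψ(t₂,r₂) - Ψ(t₁,r₁)|² ≤ C² M ‖G(t₂,·,r₂,·) - G(t₁,·,r₁,·)‖²_{L²}`.
For each `s` the `L²(O)` norm of the kernel difference is at most its sup norm times its
`L¹(O)` norm, and the latter is at most `2K` by (G1). For `t₁ ≤ s < t₂` only `G(t₂,…)`
survives, and (G2) bounds the contribution by `(t₂ - t₁)^(1 - d/γ)`. For `s < t₁`, interpolating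
between the crude bound `2K (t₁ - s)^(-d/γ)` from (G2) and the time part of (G3) gives
`2K (t₂ - t₁)^(2α) (t₁ - s)^(-(d/γ + 2α))`, which is integrable because `d/γ + 2α < 1`; the space
part of (G3) with `β = α` gives `‖r₁ - r₂‖^(2α) (t₁ - s)^(-(d + 2α)/γ)`. Both exponents of
`t₂ - t₁` and `‖r₁ - r₂‖` are at least `2α`, so the squared `L²` distance is `O(ρ^(2α))`.
-/

open MeasureTheory Filter Set Topology
open scoped ENNReal NNReal

noncomputable section

/-- Euclidean space `ℝ^d`. -/
abbrev Euc (d : ℕ) := EuclideanSpace ℝ (Fin d)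

/-- `u ∈ L²([0,T] × O)`. -/
def MemL2 {d : ℕ} (O : Set (Euc d)) (T : ℝ) (u : ℝ → Euc d → ℝ) : Prop :=
  MemLp (fun p : ℝ × Euc d => u p.1 p.2) 2
    (((volume : Measure ℝ).restrict (Icc (0:ℝ) T)).prod
      ((volume : Measure (Euc d)).restrict O))

/-- `∫_{[0,T]×O} u²`, as an extended real. -/
def energy {d : ℕ} (O : Set (Euc d)) (T : ℝ) (u : ℝ → Euc d → ℝ) : ℝ≥0∞ :=
  ∫⁻ s in Icc (0:ℝ) T, ∫⁻ q in O, (‖u s q‖₊ : ℝ≥0∞) ^ 2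

theorem min_le_rpow_mul_rpow {P Q θ : ℝ} (hP : 0 ≤ P) (hQ : 0 ≤ Q) (hθ₀ : 0 ≤ θ)
    (hθ₁ : θ ≤ 1) : min P Q ≤ P ^ (1 - θ) * Q ^ θ := by
  have hm : 0 ≤ min P Q := le_min hP hQ
  calc min P Q = min P Q ^ (1 - θ) * min P Q ^ θ := by
        rw [← Real.rpow_add' hm (by norm_num), sub_add_cancel, Real.rpow_one]
    _ ≤ P ^ (1 - θ) * Q ^ θ :=
        mul_le_mul (Real.rpow_le_rpow hm (min_le_left _ _) (by linarith))
          (Real.rpow_le_rpow hm (min_le_right _ _) hθ₀) (by positivity) (by positivity)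

theorem min_rpow_neg_le {a α ε τ : ℝ} (hε : 0 ≤ ε) (hτ : 0 < τ) (hα : 0 ≤ α)
    (hαa : 2 * α ≤ 1 - a) :
    min (τ ^ (-a)) (ε ^ (1 - a) * τ⁻¹) ≤ ε ^ (2 * α) * τ ^ (-(a + 2 * α)) := by
  rcases (show 0 ≤ 1 - a by linarith).eq_or_lt with ha | ha
  · have hα0 : α = 0 := by linarith
    subst hα0
    simp [← ha]
  set θ := 2 * α / (1 - a)
  have hθ : (1 - a) * θ = 2 * α := mul_div_cancel₀ _ ha.ne'
  calc min (τ ^ (-a)) (ε ^ (1 - a) * τ⁻¹)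
      ≤ (τ ^ (-a)) ^ (1 - θ) * (ε ^ (1 - a) * τ⁻¹) ^ θ :=
        min_le_rpow_mul_rpow (by positivity) (by positivity) (by positivity)
          (div_le_one_of_le₀ hαa ha.le)
    _ = ε ^ ((1 - a) * θ) * τ ^ (-a * (1 - θ) + -θ) := by
        rw [Real.mul_rpow (by positivity) (by positivity), ← Real.rpow_mul hτ.le,
          ← Real.rpow_mul hε, Real.inv_rpow hτ.le, ← Real.rpow_neg hτ.le,
          Real.rpow_add hτ]
        ring
    _ = ε ^ (2 * α) * τ ^ (-(a + 2 * α)) := by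
        rw [hθ, ← hθ]
        ring_nf

theorem setLIntegral_Ico_sub_rpow_neg {c x y : ℝ} (hc : c < 1) (hxy : x ≤ y) :
    ∫⁻ s in Ico x y, ENNReal.ofReal ((y - s) ^ (-c)) =
      ENNReal.ofReal ((y - x) ^ (1 - c) / (1 - c)) := by
  have hint : IntervalIntegrable (fun s => (y - s) ^ (-c)) volume x y := by
    simpa using (intervalIntegral.intervalIntegrable_rpow' (r := -c) (a := y - y) (b := y - x)
      (by linarith)).comp_sub_left y |>.symm
  rw [← ofReal_integral_eq_lintegral_ofReal
      ((intervalIntegrable_iff_integrableOn_Ico_of_le hxy).mp hint)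
      (ae_restrict_of_forall_mem measurableSet_Ico fun s hs =>
        Real.rpow_nonneg (by linarith [hs.2]) _),
    integral_Ico_eq_integral_Ioc, ← intervalIntegral.integral_of_le hxy,
    intervalIntegral.integral_comp_sub_left (fun τ => τ ^ (-c)) y, sub_self,
    integral_rpow (Or.inl (by linarith)), Real.zero_rpow (by linarith)]
  ring_nf

theorem setLIntegral_Ico_le_of_le_mul_rpow_neg {F : ℝ → ℝ≥0∞} {k c x y : ℝ} (hk : 0 ≤ k)
    (hc : c < 1) (hxy : x ≤ y) (hF : ∀ s ∈ Ico x y, F s ≤ ENNReal.ofReal (k * (y - s) ^ (-c))) :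
    ∫⁻ s in Ico x y, F s ≤ ENNReal.ofReal (k * ((y - x) ^ (1 - c) / (1 - c))) :=
  calc ∫⁻ s in Ico x y, F s
      ≤ ∫⁻ s in Ico x y, ENNReal.ofReal k * ENNReal.ofReal ((y - s) ^ (-c)) :=
        setLIntegral_mono' measurableSet_Ico fun s hs =>
          (hF s hs).trans_eq (ENNReal.ofReal_mul hk)
    _ = ENNReal.ofReal (k * ((y - x) ^ (1 - c) / (1 - c))) := by
        rw [lintegral_const_mul' _ _ ENNReal.ofReal_ne_top, setLIntegral_Ico_sub_rpow_neg hc hxy,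
          ENNReal.ofReal_mul hk]

theorem setLIntegral_Icc_le_setLIntegral_Ico {F : ℝ → ℝ≥0∞} {t T : ℝ}
    (hF : ∀ s, t ≤ s → F s = 0) : ∫⁻ s in Icc 0 T, F s ≤ ∫⁻ s in Ico 0 t, F s := by
  have hzero : ∫⁻ s in Ici t, F s = 0 :=
    (setLIntegral_congr_fun measurableSet_Ici hF).trans lintegral_zero
  calc ∫⁻ s in Icc 0 T, F s ≤ ∫⁻ s in Ico 0 t ∪ Ici t, F s :=
        lintegral_mono_set fun s hs => (lt_or_ge s t).imp (fun h => ⟨hs.1, h⟩) id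
    _ ≤ ∫⁻ s in Ico 0 t, F s := (lintegral_union_le F _ _).trans_eq (by rw [hzero, add_zero])

theorem abs_le_sqrt_of_enorm_sq_le {x y : ℝ} (h : ‖x‖ₑ ^ 2 ≤ ENNReal.ofReal y) : |x| ≤ √y := by
  rw [← ofReal_norm, ← ENNReal.ofReal_pow (norm_nonneg x), Real.norm_eq_abs, sq_abs,
    ENNReal.ofReal_le_ofReal_iff'] at h
  rcases h with h | h
  · exact Real.abs_le_sqrt h
  · rw [pow_eq_zero_iff two_ne_zero |>.mp (le_antisymm h (sq_nonneg x)), abs_zero]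
    exact Real.sqrt_nonneg y

section L2Bounds

variable {X : Type*} [MeasurableSpace X] {μ : Measure X}

theorem setLIntegral_enorm_sq_le_of_abs_le {O : Set X} (hO : MeasurableSet O) {W : X → ℝ}
    {S L : ℝ} (hS : 0 ≤ S) (hW : ∀ x ∈ O, |W x| ≤ S)
    (hL : ∫⁻ x in O, ‖W x‖ₑ ∂μ ≤ ENNReal.ofReal L) :
    ∫⁻ x in O, ‖W x‖ₑ ^ 2 ∂μ ≤ ENNReal.ofReal (S * L) :=
  calc ∫⁻ x in O, ‖W x‖ₑ ^ 2 ∂μ ≤ ∫⁻ x in O, ENNReal.ofReal S * ‖W x‖ₑ ∂μ :=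
        setLIntegral_mono' hO fun x hx => by
          rw [sq, ← ofReal_norm, Real.norm_eq_abs]
          gcongr
          exact hW x hx
    _ = ENNReal.ofReal S * ∫⁻ x in O, ‖W x‖ₑ ∂μ := lintegral_const_mul' _ _ ENNReal.ofReal_ne_top
    _ ≤ ENNReal.ofReal (S * L) := by
        rw [ENNReal.ofReal_mul hS]
        gcongr

theorem lintegral_mul_sq_le {f g : X → ℝ≥0∞} (hf : AEMeasurable f μ) (hg : AEMeasurable g μ) :
    (∫⁻ x, f x * g x ∂μ) ^ 2 ≤ (∫⁻ x, f x ^ 2 ∂μ) * ∫⁻ x, g x ^ 2 ∂μ := by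
  have h := ENNReal.lintegral_mul_le_Lp_mul_Lq μ Real.HolderConjugate.two_two hf hg
  simp only [Pi.mul_apply, ENNReal.rpow_two] at h
  calc (∫⁻ x, f x * g x ∂μ) ^ 2
      ≤ ((∫⁻ x, f x ^ 2 ∂μ) ^ (1 / 2 : ℝ) * (∫⁻ x, g x ^ 2 ∂μ) ^ (1 / 2 : ℝ)) ^ 2 := by gcongr
    _ = (∫⁻ x, f x ^ 2 ∂μ) * ∫⁻ x, g x ^ 2 ∂μ := by
        rw [mul_pow, ← ENNReal.rpow_natCast, ← ENNReal.rpow_natCast, ← ENNReal.rpow_mul,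
          ← ENNReal.rpow_mul]
        norm_num

variable {v f u : X → ℝ} {B : ℝ≥0∞}

theorem lintegral_enorm_mul_mul_sq_le (hv : AEMeasurable v μ) (hf : AEMeasurable f μ)
    (hu : AEMeasurable u μ) (hfB : ∀ᵐ x ∂μ, ‖f x‖ₑ ≤ B) :
    (∫⁻ x, ‖v x * f x * u x‖ₑ ∂μ) ^ 2 ≤
      B ^ 2 * (∫⁻ x, ‖v x‖ₑ ^ 2 ∂μ) * ∫⁻ x, ‖u x‖ₑ ^ 2 ∂μ :=
  calc (∫⁻ x, ‖v x * f x * u x‖ₑ ∂μ) ^ 2 = (∫⁻ x, ‖v x * f x‖ₑ * ‖u x‖ₑ ∂μ) ^ 2 := by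
        simp only [enorm_mul]
    _ ≤ (∫⁻ x, ‖v x * f x‖ₑ ^ 2 ∂μ) * ∫⁻ x, ‖u x‖ₑ ^ 2 ∂μ :=
        lintegral_mul_sq_le (hv.mul hf).enorm hu.enorm
    _ ≤ (∫⁻ x, B ^ 2 * ‖v x‖ₑ ^ 2 ∂μ) * ∫⁻ x, ‖u x‖ₑ ^ 2 ∂μ := by
        gcongr ?_ * _
        refine lintegral_mono_ae (hfB.mono fun x hx => ?_)
        rw [enorm_mul, mul_pow, mul_comm]
        gcongr
    _ = B ^ 2 * (∫⁻ x, ‖v x‖ₑ ^ 2 ∂μ) * ∫⁻ x, ‖u x‖ₑ ^ 2 ∂μ := by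
        rw [lintegral_const_mul'' _ (hv.enorm.pow_const 2)]

theorem integrable_mul_mul_of_lintegral_sq_ne_top (hv : AEMeasurable v μ)
    (hf : AEMeasurable f μ) (hu : AEMeasurable u μ) (hfB : ∀ᵐ x ∂μ, ‖f x‖ₑ ≤ B) (hB : B ≠ ∞)
    (hv₂ : ∫⁻ x, ‖v x‖ₑ ^ 2 ∂μ ≠ ∞) (hu₂ : ∫⁻ x, ‖u x‖ₑ ^ 2 ∂μ ≠ ∞) :
    Integrable (fun x => v x * f x * u x) μ := by
  refine ⟨((hv.mul hf).mul hu).aestronglyMeasurable, hasFiniteIntegral_iff_enorm.mpr ?_⟩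
  have h := (lintegral_enorm_mul_mul_sq_le hv hf hu hfB).trans_lt
    (ENNReal.mul_lt_top (ENNReal.mul_lt_top (ENNReal.pow_lt_top hB.lt_top) hv₂.lt_top) hu₂.lt_top)
  simpa using h

theorem enorm_integral_mul_mul_sq_le (hv : AEMeasurable v μ) (hf : AEMeasurable f μ)
    (hu : AEMeasurable u μ) (hfB : ∀ᵐ x ∂μ, ‖f x‖ₑ ≤ B) :
    ‖∫ x, v x * f x * u x ∂μ‖ₑ ^ 2 ≤
      B ^ 2 * (∫⁻ x, ‖v x‖ₑ ^ 2 ∂μ) * ∫⁻ x, ‖u x‖ₑ ^ 2 ∂μ :=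
  (pow_le_pow_left₀ zero_le (enorm_integral_le_lintegral_enorm _) 2).trans
    (lintegral_enorm_mul_mul_sq_le hv hf hu hfB)

theorem abs_integral_sub_integral_le {g₁ g₂ : X → ℝ} {C D M : ℝ} (hg₁ : AEMeasurable g₁ μ)
    (hg₂ : AEMeasurable g₂ μ) (hf : AEMeasurable f μ) (hu : AEMeasurable u μ)
    (hfC : ∀ᵐ x ∂μ, ‖f x‖ₑ ≤ ‖C‖ₑ) (hint₁ : Integrable (fun x => g₁ x * f x * u x) μ)
    (hint₂ : Integrable (fun x => g₂ x * f x * u x) μ) (hD : 0 ≤ D)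
    (hg : ∫⁻ x, ‖g₂ x - g₁ x‖ₑ ^ 2 ∂μ ≤ ENNReal.ofReal D)
    (huM : ∫⁻ x, ‖u x‖ₑ ^ 2 ∂μ ≤ ENNReal.ofReal M) :
    |∫ x, g₂ x * f x * u x ∂μ - ∫ x, g₁ x * f x * u x ∂μ| ≤ √(C ^ 2 * D * M) := by
  refine abs_le_sqrt_of_enorm_sq_le ?_
  rw [← integral_sub hint₂ hint₁]
  calc ‖∫ x, (g₂ x * f x * u x - g₁ x * f x * u x) ∂μ‖ₑ ^ 2
      = ‖∫ x, (g₂ x - g₁ x) * f x * u x ∂μ‖ₑ ^ 2 := by simp only [sub_mul]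
    _ ≤ ‖C‖ₑ ^ 2 * (∫⁻ x, ‖g₂ x - g₁ x‖ₑ ^ 2 ∂μ) * ∫⁻ x, ‖u x‖ₑ ^ 2 ∂μ :=
        enorm_integral_mul_mul_sq_le (hg₂.sub hg₁) hf hu hfC
    _ ≤ ENNReal.ofReal (C ^ 2) * ENNReal.ofReal D * ENNReal.ofReal M := by
        rw [← ofReal_norm, ← ENNReal.ofReal_pow (norm_nonneg C), Real.norm_eq_abs, sq_abs]
        gcongr
    _ = ENNReal.ofReal (C ^ 2 * D * M) := by
        rw [← ENNReal.ofReal_mul (sq_nonneg C), ← ENNReal.ofReal_mul (by positivity)]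

end L2Bounds

theorem setIntegral_Icc_eq_integral_prod {Y : Type*} [MeasurableSpace Y] {ν : Measure Y}
    [SFinite ν] {F : ℝ × Y → ℝ} {t T : ℝ} (htT : t ≤ T) (hF : ∀ p : ℝ × Y, t < p.1 → F p = 0)
    (hint : Integrable F ((volume.restrict (Icc 0 T)).prod ν)) :
    ∫ s in Icc 0 t, ∫ y, F (s, y) ∂ν = ∫ p, F p ∂(volume.restrict (Icc 0 T)).prod ν := by
  rw [integral_prod _ hint]
  refine (setIntegral_eq_of_subset_of_forall_sdiff_eq_zero measurableSet_Icc
    (Icc_subset_Icc_right htT) fun s hs => ?_).symm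
  have hts : t < s := lt_of_not_ge fun h => hs.2 ⟨hs.1.1, h⟩
  simp [hF (s, _) hts]

theorem div_add_two_mul_lt_one {d γ α : ℝ} (hγ : d < γ) (hd : 0 ≤ d)
    (hα : α < (γ - d) / (2 * γ)) : d / γ + 2 * α < 1 := by
  have hγ₀ : 0 < γ := hd.trans_lt hγ
  have : 2 * α < (γ - d) / γ := by
    rw [lt_div_iff₀ (by positivity)] at hα
    rw [lt_div_iff₀ hγ₀]
    linarith
  rw [sub_div, div_self hγ₀.ne'] at this
  linarith

theorem norm_sub_rpow_mul_rpow_le {d : ℕ} {γ α τ T : ℝ} (hγ : (d : ℝ) < γ) (hα : 0 < α)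
    (hτ : 0 < τ) (hτT : τ ≤ T) (r₁ r₂ : Euc d) :
    ‖r₁ - r₂‖ ^ (2 * α) * τ ^ (-((d : ℝ) + 2 * α) / γ) ≤
      T ^ (2 * α - 2 * α / γ) * ‖r₁ - r₂‖ ^ (2 * α) * τ ^ (-((d : ℝ) / γ + 2 * α)) := by
  rcases Nat.eq_zero_or_pos d with rfl | hd
  · rw [Subsingleton.elim r₁ r₂, sub_self, norm_zero, Real.zero_rpow (by positivity)]
    simp
  -- for `d ≥ 1` we have `γ > 1`, hence `(d + 2α)/γ ≤ d/γ + 2α`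
  have hγ₁ : 1 ≤ γ := le_trans (by exact_mod_cast hd) hγ.le
  have hexp : 0 ≤ 2 * α - 2 * α / γ := by
    rw [sub_nonneg]
    exact div_le_self (by positivity) hγ₁
  have hsplit : τ ^ (-((d : ℝ) + 2 * α) / γ) =
      τ ^ (2 * α - 2 * α / γ) * τ ^ (-((d : ℝ) / γ + 2 * α)) := by
    rw [← Real.rpow_add hτ]
    congr 1
    ring
  rw [hsplit]
  have := Real.rpow_le_rpow hτ.le hτT hexp
  have : 0 ≤ ‖r₁ - r₂‖ ^ (2 * α) * τ ^ (-((d : ℝ) / γ + 2 * α)) := by positivity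
  nlinarith

/-- The hypotheses on the kernel: causality, (G1), (G2) and (G3). -/
structure KernelBounds {d : ℕ} (O : Set (Euc d)) (T K γ : ℝ)
    (G : ℝ → ℝ → Euc d → Euc d → ℝ) : Prop where
  measurable : Measurable fun p : (ℝ × ℝ) × Euc d × Euc d => G p.1.1 p.1.2 p.2.1 p.2.2
  eq_zero : ∀ t s : ℝ, t ≤ s → ∀ r q : Euc d, G t s r q = 0
  lintegral_enorm_le : ∀ t ∈ Icc (0:ℝ) T, ∀ s ∈ Icc (0:ℝ) T, ∀ r ∈ O,
    ∫⁻ q in O, ‖G t s r q‖ₑ ≤ ENNReal.ofReal K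
  abs_le : ∀ s t : ℝ, 0 ≤ s → s < t → t ≤ T → ∀ r ∈ O, ∀ q ∈ O,
    |G t s r q| ≤ K * (t - s) ^ (-(d : ℝ) / γ)
  abs_sub_le : ∀ β : ℝ, 0 < β → β < (γ - d) / (2 * γ) →
    ∀ s t₁ t₂ : ℝ, 0 ≤ s → s < t₁ → t₁ ≤ t₂ → t₂ ≤ T →
    ∀ r₁ ∈ O, ∀ r₂ ∈ O, ∀ q ∈ O,
    |G t₁ s r₁ q - G t₂ s r₂ q| ≤
      K * ((t₂ - t₁) ^ (1 - (d : ℝ) / γ) * (t₁ - s)⁻¹ +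
        ‖r₁ - r₂‖ ^ (2 * β) * (t₁ - s) ^ (-((d : ℝ) + 2 * β) / γ))

namespace KernelBounds

variable {d : ℕ} {O : Set (Euc d)} {T K γ : ℝ} {G : ℝ → ℝ → Euc d → Euc d → ℝ}

theorem measurable_prod_slice (hG : KernelBounds O T K γ G) (t : ℝ) (r : Euc d) :
    Measurable fun p : ℝ × Euc d => G t p.1 r p.2 :=
  hG.measurable.comp <|
    (measurable_const.prodMk measurable_fst).prodMk (measurable_const.prodMk measurable_snd)

theorem lintegral_enorm_sub_le (hG : KernelBounds O T K γ G) (hK : 0 ≤ K) {s t₁ t₂ : ℝ}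
    {r₁ r₂ : Euc d} (hs : s ∈ Icc 0 T) (ht₁ : t₁ ∈ Icc 0 T) (ht₂ : t₂ ∈ Icc 0 T) (hr₁ : r₁ ∈ O)
    (hr₂ : r₂ ∈ O) : ∫⁻ q in O, ‖G t₂ s r₂ q - G t₁ s r₁ q‖ₑ ≤ ENNReal.ofReal (2 * K) :=
  calc ∫⁻ q in O, ‖G t₂ s r₂ q - G t₁ s r₁ q‖ₑ
      ≤ ∫⁻ q in O, (‖G t₂ s r₂ q‖ₑ + ‖G t₁ s r₁ q‖ₑ) := lintegral_mono fun q => enorm_sub_le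
    _ = (∫⁻ q in O, ‖G t₂ s r₂ q‖ₑ) + ∫⁻ q in O, ‖G t₁ s r₁ q‖ₑ :=
        lintegral_add_left ((hG.measurable_prod_slice t₂ r₂).comp measurable_prodMk_left).enorm _
    _ ≤ ENNReal.ofReal K + ENNReal.ofReal K :=
        add_le_add (hG.lintegral_enorm_le t₂ ht₂ s hs r₂ hr₂)
          (hG.lintegral_enorm_le t₁ ht₁ s hs r₁ hr₁)
    _ = ENNReal.ofReal (2 * K) := by rw [← ENNReal.ofReal_add hK hK, two_mul]

theorem abs_sub_le_of_lt (hG : KernelBounds O T K γ G) (hK : 0 ≤ K) (hγ : (d : ℝ) < γ)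
    {α : ℝ} (hα₀ : 0 < α) (hα : α < (γ - d) / (2 * γ)) {s t₁ t₂ : ℝ} (hs : 0 ≤ s)
    (hst₁ : s < t₁) (ht₁₂ : t₁ ≤ t₂) (ht₂ : t₂ ≤ T) {r₁ r₂ q : Euc d} (hr₁ : r₁ ∈ O)
    (hr₂ : r₂ ∈ O) (hq : q ∈ O) :
    |G t₂ s r₂ q - G t₁ s r₁ q| ≤
      2 * K * ((t₂ - t₁) ^ (2 * α) * (t₁ - s) ^ (-((d : ℝ) / γ + 2 * α))) +
        K * (‖r₁ - r₂‖ ^ (2 * α) * (t₁ - s) ^ (-((d : ℝ) + 2 * α) / γ)) := by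
  set P := (t₁ - s) ^ (-((d : ℝ) / γ))
  set Q := (t₂ - t₁) ^ (1 - (d : ℝ) / γ) * (t₁ - s)⁻¹
  set Z := ‖r₁ - r₂‖ ^ (2 * α) * (t₁ - s) ^ (-((d : ℝ) + 2 * α) / γ)
  have hτ : 0 < t₁ - s := sub_pos.mpr hst₁
  have hγ₀ : 0 < γ := (Nat.cast_nonneg d).trans_lt hγ
  have hcrude : |G t₂ s r₂ q - G t₁ s r₁ q| ≤ 2 * K * P := by
    have h₂ := hG.abs_le s t₂ hs (hst₁.trans_le ht₁₂) ht₂ r₂ hr₂ q hq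
    have h₁ := hG.abs_le s t₁ hs hst₁ (ht₁₂.trans ht₂) r₁ hr₁ q hq
    have hmono : (t₂ - s) ^ (-((d : ℝ) / γ)) ≤ P :=
      Real.rpow_le_rpow_of_nonpos hτ (by linarith) (neg_nonpos.mpr (by positivity))
    rw [neg_div] at h₁ h₂
    calc |G t₂ s r₂ q - G t₁ s r₁ q| ≤ |G t₂ s r₂ q| + |G t₁ s r₁ q| := abs_sub _ _
      _ ≤ 2 * K * P := by nlinarith
  have hholder : |G t₂ s r₂ q - G t₁ s r₁ q| ≤ K * Q + K * Z := by
    rw [abs_sub_comm, ← mul_add]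
    exact hG.abs_sub_le α hα₀ hα s t₁ t₂ hs hst₁ ht₁₂ ht₂ r₁ hr₁ r₂ hr₂ q hq
  have hZ : 0 ≤ K * Z := by positivity
  have hmin : |G t₂ s r₂ q - G t₁ s r₁ q| ≤ 2 * K * min P Q + K * Z := by
    rcases min_cases P Q with ⟨h, -⟩ | ⟨h, -⟩ <;> rw [h]
    · linarith
    · have : 0 ≤ K * Q := by positivity
      linarith
  have hinterp : min P Q ≤ (t₂ - t₁) ^ (2 * α) * (t₁ - s) ^ (-((d : ℝ) / γ + 2 * α)) :=
    min_rpow_neg_le (sub_nonneg.mpr ht₁₂) hτ hα₀.le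
      (by linarith [div_add_two_mul_lt_one hγ (Nat.cast_nonneg d) hα])
  calc |G t₂ s r₂ q - G t₁ s r₁ q| ≤ 2 * K * min P Q + K * Z := hmin
    _ ≤ _ := by gcongr

theorem setLIntegral_Ico_sq_le (hG : KernelBounds O T K γ G) (hO : MeasurableSet O)
    (hK : 0 ≤ K) (hγ : (d : ℝ) < γ) {t₀ t : ℝ} {r : Euc d} (ht₀ : 0 ≤ t₀) (ht₀t : t₀ ≤ t)
    (ht : t ≤ T) (hr : r ∈ O) :
    ∫⁻ s in Ico t₀ t, ∫⁻ q in O, ‖G t s r q‖ₑ ^ 2 ≤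
      ENNReal.ofReal (K ^ 2 * ((t - t₀) ^ (1 - (d : ℝ) / γ) / (1 - (d : ℝ) / γ))) := by
  have hγ₀ : 0 < γ := (Nat.cast_nonneg d).trans_lt hγ
  refine setLIntegral_Ico_le_of_le_mul_rpow_neg (sq_nonneg K) ((div_lt_one hγ₀).mpr hγ) ht₀t
    fun s hs => ?_
  have hs' : s ∈ Icc 0 T := ⟨ht₀.trans hs.1, hs.2.le.trans ht⟩
  have ht' : t ∈ Icc 0 T := ⟨hs'.1.trans hs.2.le, ht⟩
  refine (setLIntegral_enorm_sq_le_of_abs_le hO (S := K * (t - s) ^ (-((d : ℝ) / γ)))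
    (by have := sub_pos.mpr hs.2; positivity) (fun q hq => ?_)
    (hG.lintegral_enorm_le t ht' s hs' r hr)).trans_eq ?_
  · simpa only [neg_div] using hG.abs_le s t hs'.1 hs.2 ht r hr q hq
  · ring_nf

theorem lintegral_sq_lt_top (hG : KernelBounds O T K γ G) (hO : MeasurableSet O)
    (hK : 0 ≤ K) (hγ : (d : ℝ) < γ) {t : ℝ} {r : Euc d} (ht : t ∈ Icc 0 T) (hr : r ∈ O) :
    ∫⁻ s in Icc 0 T, ∫⁻ q in O, ‖G t s r q‖ₑ ^ 2 < ∞ :=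
  (setLIntegral_Icc_le_setLIntegral_Ico fun s hs => by simp [hG.eq_zero t s hs]).trans_lt <|
    (hG.setLIntegral_Ico_sq_le hO hK hγ le_rfl ht.1 ht.2 hr).trans_lt ENNReal.ofReal_lt_top

theorem setLIntegral_Ico_sq_sub_le (hG : KernelBounds O T K γ G) (hO : MeasurableSet O)
    (hK : 0 ≤ K) (hγ : (d : ℝ) < γ) {α : ℝ} (hα₀ : 0 < α) (hα : α < (γ - d) / (2 * γ))
    {t₁ t₂ : ℝ} (ht₁ : 0 ≤ t₁) (ht₁₂ : t₁ ≤ t₂) (ht₂ : t₂ ≤ T) {r₁ r₂ : Euc d} (hr₁ : r₁ ∈ O)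
    (hr₂ : r₂ ∈ O) :
    ∫⁻ s in Ico 0 t₁, ∫⁻ q in O, ‖G t₂ s r₂ q - G t₁ s r₁ q‖ₑ ^ 2 ≤
      ENNReal.ofReal (2 * K ^ 2 *
        (2 * (t₂ - t₁) ^ (2 * α) + T ^ (2 * α - 2 * α / γ) * ‖r₁ - r₂‖ ^ (2 * α)) *
        (t₁ ^ (1 - ((d : ℝ) / γ + 2 * α)) / (1 - ((d : ℝ) / γ + 2 * α)))) := by
  set L := 2 * (t₂ - t₁) ^ (2 * α) + T ^ (2 * α - 2 * α / γ) * ‖r₁ - r₂‖ ^ (2 * α)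
  have hL : 0 ≤ L := by
    have : 0 ≤ T := ht₁.trans (ht₁₂.trans ht₂)
    positivity
  have hfiber : ∀ s ∈ Ico 0 t₁, ∫⁻ q in O, ‖G t₂ s r₂ q - G t₁ s r₁ q‖ₑ ^ 2 ≤
      ENNReal.ofReal (2 * K ^ 2 * L * (t₁ - s) ^ (-((d : ℝ) / γ + 2 * α))) := by
    intro s hs
    have hτ : 0 < t₁ - s := sub_pos.mpr hs.2
    have hs' : s ∈ Icc 0 T := ⟨hs.1, hs.2.le.trans (ht₁₂.trans ht₂)⟩
    have hsup : ∀ q ∈ O, |G t₂ s r₂ q - G t₁ s r₁ q| ≤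
        K * L * (t₁ - s) ^ (-((d : ℝ) / γ + 2 * α)) := fun q hq => by
      have hspace := norm_sub_rpow_mul_rpow_le hγ hα₀ hτ
        (by linarith [hs.1, ht₁₂, ht₂] : t₁ - s ≤ T) r₁ r₂
      calc |G t₂ s r₂ q - G t₁ s r₁ q| ≤ _ :=
            hG.abs_sub_le_of_lt hK hγ hα₀ hα hs.1 hs.2 ht₁₂ ht₂ hr₁ hr₂ hq
        _ ≤ 2 * K * ((t₂ - t₁) ^ (2 * α) * (t₁ - s) ^ (-((d : ℝ) / γ + 2 * α))) +
            K * (T ^ (2 * α - 2 * α / γ) * ‖r₁ - r₂‖ ^ (2 * α) *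
              (t₁ - s) ^ (-((d : ℝ) / γ + 2 * α))) := by gcongr
        _ = K * L * (t₁ - s) ^ (-((d : ℝ) / γ + 2 * α)) := by ring
    refine (setLIntegral_enorm_sq_le_of_abs_le hO (by positivity) hsup
      (hG.lintegral_enorm_sub_le hK hs' ⟨ht₁, ht₁₂.trans ht₂⟩ ⟨ht₁.trans ht₁₂, ht₂⟩ hr₁ hr₂)
      ).trans_eq ?_
    ring_nf
  simpa only [sub_zero] using setLIntegral_Ico_le_of_le_mul_rpow_neg (by positivity)
    (div_add_two_mul_lt_one hγ (Nat.cast_nonneg d) hα) ht₁ hfiber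

theorem lintegral_sq_sub_le_of_le (hG : KernelBounds O T K γ G) (hO : MeasurableSet O)
    (hK : 0 ≤ K) (hγ : (d : ℝ) < γ) {α : ℝ} (hα₀ : 0 < α) (hα : α < (γ - d) / (2 * γ))
    {t₁ t₂ : ℝ} (ht₁ : 0 ≤ t₁) (ht₁₂ : t₁ ≤ t₂) (ht₂ : t₂ ≤ T) {r₁ r₂ : Euc d} (hr₁ : r₁ ∈ O)
    (hr₂ : r₂ ∈ O) :
    ∫⁻ s in Icc 0 T, ∫⁻ q in O, ‖G t₂ s r₂ q - G t₁ s r₁ q‖ₑ ^ 2 ≤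
      ENNReal.ofReal (2 * K ^ 2 *
        (2 * (t₂ - t₁) ^ (2 * α) + T ^ (2 * α - 2 * α / γ) * ‖r₁ - r₂‖ ^ (2 * α)) *
        (t₁ ^ (1 - ((d : ℝ) / γ + 2 * α)) / (1 - ((d : ℝ) / γ + 2 * α))) +
        K ^ 2 * ((t₂ - t₁) ^ (1 - (d : ℝ) / γ) / (1 - (d : ℝ) / γ))) := by
  have hc : 0 < 1 - ((d : ℝ) / γ + 2 * α) :=
    sub_pos.mpr (div_add_two_mul_lt_one hγ (Nat.cast_nonneg d) hα)
  have ha : 0 < 1 - (d : ℝ) / γ := by linarith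
  have hT : 0 ≤ T := ht₁.trans (ht₁₂.trans ht₂)
  have hpiece₂ : ∫⁻ s in Ico t₁ t₂, ∫⁻ q in O, ‖G t₂ s r₂ q - G t₁ s r₁ q‖ₑ ^ 2 ≤
      ENNReal.ofReal (K ^ 2 * ((t₂ - t₁) ^ (1 - (d : ℝ) / γ) / (1 - (d : ℝ) / γ))) :=
    (setLIntegral_congr_fun measurableSet_Ico fun s hs => by
      simp only [hG.eq_zero t₁ s hs.1, sub_zero]).trans_le
      (hG.setLIntegral_Ico_sq_le hO hK hγ ht₁ ht₁₂ ht₂ hr₂)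
  calc ∫⁻ s in Icc 0 T, ∫⁻ q in O, ‖G t₂ s r₂ q - G t₁ s r₁ q‖ₑ ^ 2
      ≤ ∫⁻ s in Ico 0 t₂, ∫⁻ q in O, ‖G t₂ s r₂ q - G t₁ s r₁ q‖ₑ ^ 2 :=
        setLIntegral_Icc_le_setLIntegral_Ico fun s hs => by
          simp [hG.eq_zero t₂ s hs, hG.eq_zero t₁ s (ht₁₂.trans hs)]
    _ ≤ (∫⁻ s in Ico 0 t₁, ∫⁻ q in O, ‖G t₂ s r₂ q - G t₁ s r₁ q‖ₑ ^ 2) +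
          ∫⁻ s in Ico t₁ t₂, ∫⁻ q in O, ‖G t₂ s r₂ q - G t₁ s r₁ q‖ₑ ^ 2 := by
        rw [← Ico_union_Ico_eq_Ico ht₁ ht₁₂]
        exact lintegral_union_le _ _ _
    _ ≤ _ := by
        rw [ENNReal.ofReal_add (by positivity) (by positivity)]
        exact add_le_add (hG.setLIntegral_Ico_sq_sub_le hO hK hγ hα₀ hα ht₁ ht₁₂ ht₂ hr₁ hr₂)
          hpiece₂

theorem exists_lintegral_sq_sub_le (hG : KernelBounds O T K γ G) (hO : MeasurableSet O)
    (hT : 0 ≤ T) (hK : 0 ≤ K) (hγ : (d : ℝ) < γ) {α : ℝ} (hα₀ : 0 < α)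
    (hα : α < (γ - d) / (2 * γ)) :
    ∃ c, 0 ≤ c ∧ ∀ t₁ ∈ Icc 0 T, ∀ t₂ ∈ Icc 0 T, ∀ r₁ ∈ O, ∀ r₂ ∈ O,
      ∫⁻ s in Icc 0 T, ∫⁻ q in O, ‖G t₂ s r₂ q - G t₁ s r₁ q‖ₑ ^ 2 ≤
        ENNReal.ofReal (c * √((t₁ - t₂) ^ 2 + ‖r₁ - r₂‖ ^ 2) ^ (2 * α)) := by
  set a := (d : ℝ) / γ
  have hc : 0 < 1 - (a + 2 * α) := sub_pos.mpr (div_add_two_mul_lt_one hγ (Nat.cast_nonneg d) hα)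
  have ha : 0 < 1 - a := by linarith
  refine ⟨2 * K ^ 2 * (2 + T ^ (2 * α - 2 * α / γ)) * (T ^ (1 - (a + 2 * α)) / (1 - (a + 2 * α)))
    + K ^ 2 * (T ^ (1 - (a + 2 * α)) / (1 - a)), by positivity, ?_⟩
  intro t₁ ht₁ t₂ ht₂ r₁ hr₁ r₂ hr₂
  wlog h : t₁ ≤ t₂ generalizing t₁ t₂ r₁ r₂
  · have hsym : (t₂ - t₁) ^ 2 + ‖r₂ - r₁‖ ^ 2 = (t₁ - t₂) ^ 2 + ‖r₁ - r₂‖ ^ 2 := by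
      rw [norm_sub_rev]; ring
    calc _ = ∫⁻ s in Icc 0 T, ∫⁻ q in O, ‖G t₁ s r₁ q - G t₂ s r₂ q‖ₑ ^ 2 := by
          simp_rw [enorm_sub_rev (G t₂ _ _ _)]
      _ ≤ _ := this t₂ ht₂ t₁ ht₁ r₂ hr₂ r₁ hr₁ (le_of_not_ge h)
      _ = _ := by rw [hsym]
  set ε := t₂ - t₁
  set δ := ‖r₁ - r₂‖
  set Δ := √((t₁ - t₂) ^ 2 + δ ^ 2)
  have hε : 0 ≤ ε := sub_nonneg.mpr h
  have hεΔ : ε ≤ Δ := by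
    have := Real.abs_le_sqrt (le_add_of_nonneg_right (sq_nonneg δ) : (t₁ - t₂) ^ 2 ≤ _)
    rwa [abs_sub_comm, abs_of_nonneg hε] at this
  have hδΔ : δ ≤ Δ := by
    simpa [δ] using Real.abs_le_sqrt (le_add_of_nonneg_left (sq_nonneg (t₁ - t₂)) : δ ^ 2 ≤ _)
  have hεT : ε ≤ T := by linarith [ht₁.1, ht₂.2]
  have ht₁T : t₁ ^ (1 - (a + 2 * α)) / (1 - (a + 2 * α)) ≤
      T ^ (1 - (a + 2 * α)) / (1 - (a + 2 * α)) := by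
    gcongr
    exacts [ht₁.1, ht₁.2]
  have htime : ε ^ (1 - a) / (1 - a) ≤ T ^ (1 - (a + 2 * α)) * Δ ^ (2 * α) / (1 - a) := by
    have hsplit : ε ^ (1 - a) = ε ^ (1 - (a + 2 * α)) * ε ^ (2 * α) := by
      rw [← Real.rpow_add' hε (by linarith)]
      ring_nf
    rw [hsplit]
    gcongr
  have hpos : 0 ≤ t₁ ^ (1 - (a + 2 * α)) / (1 - (a + 2 * α)) := by
    have := ht₁.1; positivity
  calc _ ≤ _ := hG.lintegral_sq_sub_le_of_le hO hK hγ hα₀ hα ht₁.1 h ht₂.2 hr₁ hr₂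
    _ ≤ ENNReal.ofReal (2 * K ^ 2 * (2 * Δ ^ (2 * α) + T ^ (2 * α - 2 * α / γ) * Δ ^ (2 * α)) *
          (T ^ (1 - (a + 2 * α)) / (1 - (a + 2 * α))) +
        K ^ 2 * (T ^ (1 - (a + 2 * α)) * Δ ^ (2 * α) / (1 - a))) := by
        gcongr
    _ = _ := by ring_nf

end KernelBounds

theorem stmt_13_general
    {d : ℕ} (O : Set (Euc d)) (hOopen : IsOpen O)
    (T K γ : ℝ) (hT : 0 < T) (hK : 0 < K) (hγ : (d : ℝ) < γ)
    (G : ℝ → ℝ → Euc d → Euc d → ℝ)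
    (hGmeas : Measurable fun p : (ℝ × ℝ) × Euc d × Euc d => G p.1.1 p.1.2 p.2.1 p.2.2)
    (hGzero : ∀ t s : ℝ, t ≤ s → ∀ r q : Euc d, G t s r q = 0)
    (hG1 : ∀ t ∈ Icc (0:ℝ) T, ∀ s ∈ Icc (0:ℝ) T, ∀ r ∈ O,
      (∫⁻ q in O, (‖G t s r q‖₊ : ℝ≥0∞)) ≤ ENNReal.ofReal K)
    (hG2 : ∀ s t : ℝ, 0 ≤ s → s < t → t ≤ T → ∀ r ∈ O, ∀ q ∈ O,
      |G t s r q| ≤ K * (t - s) ^ (-(d : ℝ) / γ))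
    (hG3 : ∀ β : ℝ, 0 < β → β < (γ - d) / (2 * γ) →
      ∀ s t₁ t₂ : ℝ, 0 ≤ s → s < t₁ → t₁ ≤ t₂ → t₂ ≤ T →
      ∀ r₁ ∈ O, ∀ r₂ ∈ O, ∀ q ∈ O,
      |G t₁ s r₁ q - G t₂ s r₂ q| ≤
        K * ((t₂ - t₁) ^ (1 - (d : ℝ) / γ) * (t₁ - s)⁻¹ +
          ‖r₁ - r₂‖ ^ (2 * β) * (t₁ - s) ^ (-((d : ℝ) + 2 * β) / γ)))
    (C M : ℝ)
    (f : ℝ → Euc d → ℝ)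
    (hfmeas : Measurable fun p : ℝ × Euc d => f p.1 p.2)
    (hfbdd : ∀ s ∈ Icc (0:ℝ) T, ∀ q ∈ O, |f s q| ≤ C)
    (u : ℝ → Euc d → ℝ) (huL2 : MemL2 O T u)
    (huM : energy O T u ≤ ENNReal.ofReal M)
    (Ψ : ℝ → Euc d → ℝ)
    (hΨ : ∀ t r, Ψ t r = ∫ s in Icc (0:ℝ) t, ∫ q in O, G t s r q * f s q * u s q)
    (α : ℝ) (hα0 : 0 < α) (hαlt : α < (γ - (d : ℝ)) / (2 * γ)) :
    ∃ c : ℝ, 0 ≤ c ∧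
      ∀ t₁ ∈ Icc (0:ℝ) T, ∀ t₂ ∈ Icc (0:ℝ) T, ∀ r₁ ∈ O, ∀ r₂ ∈ O,
        |Ψ t₂ r₂ - Ψ t₁ r₁| ≤
          c * Real.sqrt ((t₁ - t₂) ^ 2 + ‖r₁ - r₂‖ ^ 2) ^ α := by
  have hO : MeasurableSet O := hOopen.measurableSet
  have hG : KernelBounds O T K γ G := ⟨hGmeas, hGzero, hG1, hG2, hG3⟩
  obtain ⟨c, hc₀, hc⟩ := hG.exists_lintegral_sq_sub_le hO hT.le hK.le hγ hα0 hαlt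
  set π := (volume.restrict (Icc (0:ℝ) T)).prod (volume.restrict O)
  have hf : ∀ᵐ p ∂π, ‖f p.1 p.2‖ₑ ≤ ‖C‖ₑ := by
    rw [show π = _ from Measure.prod_restrict _ _]
    filter_upwards [ae_restrict_mem (measurableSet_Icc.prod hO)] with p hp
    simp only [← ofReal_norm, Real.norm_eq_abs]
    exact ENNReal.ofReal_le_ofReal ((hfbdd p.1 hp.1 p.2 hp.2).trans (le_abs_self C))
  have hu : ∫⁻ p, ‖u p.1 p.2‖ₑ ^ 2 ∂π ≤ ENNReal.ofReal M := (lintegral_prod_le _).trans huM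
  have hGπ (t : ℝ) (r : Euc d) : AEMeasurable (fun p : ℝ × Euc d => G t p.1 r p.2) π :=
    (hG.measurable_prod_slice t r).aemeasurable
  have hint (t : ℝ) (ht : t ∈ Icc 0 T) (r : Euc d) (hr : r ∈ O) :
      Integrable (fun p => G t p.1 r p.2 * f p.1 p.2 * u p.1 p.2) π :=
    integrable_mul_mul_of_lintegral_sq_ne_top (hGπ t r) hfmeas.aemeasurable
      huL2.1.aemeasurable hf enorm_ne_top
      ((lintegral_prod_le _).trans_lt (hG.lintegral_sq_lt_top hO hK.le hγ ht hr)).ne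
      (hu.trans_lt ENNReal.ofReal_lt_top).ne
  have hrep (t : ℝ) (ht : t ∈ Icc 0 T) (r : Euc d) (hr : r ∈ O) :
      Ψ t r = ∫ p, G t p.1 r p.2 * f p.1 p.2 * u p.1 p.2 ∂π :=
    (hΨ t r).trans (setIntegral_Icc_eq_integral_prod ht.2
      (fun p hp => by simp [hGzero t p.1 hp.le]) (hint t ht r hr))
  refine ⟨√(C ^ 2 * c * M), Real.sqrt_nonneg _, fun t₁ ht₁ t₂ ht₂ r₁ hr₁ r₂ hr₂ => ?_⟩
  set Δ := √((t₁ - t₂) ^ 2 + ‖r₁ - r₂‖ ^ 2)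
  rw [hrep t₂ ht₂ r₂ hr₂, hrep t₁ ht₁ r₁ hr₁]
  calc _ ≤ √(C ^ 2 * (c * Δ ^ (2 * α)) * M) :=
        abs_integral_sub_integral_le (hGπ t₁ r₁) (hGπ t₂ r₂) hfmeas.aemeasurable
          huL2.1.aemeasurable hf (hint t₁ ht₁ r₁ hr₁) (hint t₂ ht₂ r₂ hr₂) (by positivity)
          ((lintegral_prod_le _).trans (hc t₁ ht₁ t₂ ht₂ r₁ hr₁ r₂ hr₂)) hu
    _ = √(C ^ 2 * c * M) * Δ ^ α := by
        rw [mul_comm 2 α, Real.rpow_mul (Real.sqrt_nonneg _), Real.rpow_two,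
          show C ^ 2 * (c * (Δ ^ α) ^ 2) * M = C ^ 2 * c * M * (Δ ^ α) ^ 2 by ring,
          Real.sqrt_mul' _ (by positivity), Real.sqrt_sq (by positivity)]

/-- **Hölder continuity of the controlled convolution `Ψ`.**
If `|f| ≤ C` on `[0,T]×O` and `∫_{[0,T]×O} u² ≤ M`, then for every `α ∈ (0, ᾱ)`
the function `Ψ(t,r) = ∫₀^t ∫_O G(t,s,r,q) f(s,q) u(s,q) dq ds` satisfies
`|Ψ(t₂,r₂) − Ψ(t₁,r₁)| ≤ c ρ((t₁,r₁),(t₂,r₂))^α` on `[0,T]×O`, with a constant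
`c` depending only on `α, K, T, γ, d, O, C, M`. -/
theorem stmt_13
    {d : ℕ} (O : Set (Euc d)) (hOopen : IsOpen O) (hObdd : Bornology.IsBounded O)
    (T K γ : ℝ) (hT : 0 < T) (hK : 0 < K) (hγ : (d : ℝ) < γ)
    (G : ℝ → ℝ → Euc d → Euc d → ℝ)
    (hGmeas : Measurable fun p : (ℝ × ℝ) × Euc d × Euc d => G p.1.1 p.1.2 p.2.1 p.2.2)
    (hGzero : ∀ t s : ℝ, t ≤ s → ∀ r q : Euc d, G t s r q = 0)
    (hG1 : ∀ t ∈ Icc (0:ℝ) T, ∀ s ∈ Icc (0:ℝ) T, ∀ r ∈ O,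
      (∫⁻ q in O, (‖G t s r q‖₊ : ℝ≥0∞)) ≤ ENNReal.ofReal K)
    (hG2 : ∀ s t : ℝ, 0 ≤ s → s < t → t ≤ T → ∀ r ∈ O, ∀ q ∈ O,
      |G t s r q| ≤ K * (t - s) ^ (-(d : ℝ) / γ))
    (hG3 : ∀ β : ℝ, 0 < β → β < (γ - d) / (2 * γ) →
      ∀ s t₁ t₂ : ℝ, 0 ≤ s → s < t₁ → t₁ ≤ t₂ → t₂ ≤ T →
      ∀ r₁ ∈ O, ∀ r₂ ∈ O, ∀ q ∈ O,
      |G t₁ s r₁ q - G t₂ s r₂ q| ≤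
        K * ((t₂ - t₁) ^ (1 - (d : ℝ) / γ) * (t₁ - s)⁻¹ +
          ‖r₁ - r₂‖ ^ (2 * β) * (t₁ - s) ^ (-((d : ℝ) + 2 * β) / γ)))
    (C M : ℝ)
    (f : ℝ → Euc d → ℝ)
    (hfmeas : Measurable fun p : ℝ × Euc d => f p.1 p.2)
    (hfbdd : ∀ s ∈ Icc (0:ℝ) T, ∀ q ∈ O, |f s q| ≤ C)
    (u : ℝ → Euc d → ℝ) (huL2 : MemL2 O T u)
    (huM : energy O T u ≤ ENNReal.ofReal M)
    (Ψ : ℝ → Euc d → ℝ)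
    (hΨ : ∀ t r, Ψ t r = ∫ s in Icc (0:ℝ) t, ∫ q in O, G t s r q * f s q * u s q)
    (α : ℝ) (hα0 : 0 < α) (hαlt : α < (γ - (d : ℝ)) / (2 * γ)) :
    ∃ c : ℝ, 0 ≤ c ∧
      ∀ t₁ ∈ Icc (0:ℝ) T, ∀ t₂ ∈ Icc (0:ℝ) T, ∀ r₁ ∈ O, ∀ r₂ ∈ O,
        |Ψ t₂ r₂ - Ψ t₁ r₁| ≤
          c * Real.sqrt ((t₁ - t₂) ^ 2 + ‖r₁ - r₂‖ ^ 2) ^ α :=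
  stmt_13_general O hOopen T K γ hT hK hγ G hGmeas hGzero hG1 hG2 hG3 C M f hfmeas hfbdd u huL2 huM
    Ψ hΨ α hα0 hαlt
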